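/- arXiv:2408.09272 — 5 statements merged into one kernel-verified Lean document; each statement's English description precedes it below -/
import Mathlib

section
/- In any n-ribbon tiling of a finite region R, the number τ_l of tiles whose root square has level l satisfies σ_l = Σ_{j=l−n+1}^{l} τ_j for every level l, where σ_l is the number of squares of R at level l. Consequently τ_l depends only on R (not on the tiling). -/
attribute [local instance] Classical.propDecidable

/-- The level of the unit square `[x,x+1] × [y,y+1]`, indexed by `(x,y)`. -/
def level (s : ℤ × ℤ) : ℤ := s.1 + s.2

/-- An `n`-ribbon: a connected sequence of `n` unit squares, each after the first
directly above or to the right of its predecessor. -/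
def IsRibbon (n : ℕ) (T : Finset (ℤ × ℤ)) : Prop :=
  ∃ f : ℕ → ℤ × ℤ,
    (∀ i, i + 1 < n → f (i + 1) = f i + (1, 0) ∨ f (i + 1) = f i + (0, 1)) ∧
    T = (Finset.range n).image f

/-- An `n`-ribbon tiling of a region `R`: a partition of the squares of `R` into `n`-ribbons. -/
def IsTiling (n : ℕ) (R : Finset (ℤ × ℤ)) (P : Finset (Finset (ℤ × ℤ))) : Prop :=
  (∀ T ∈ P, IsRibbon n T) ∧
  (P : Set (Finset (ℤ × ℤ))).PairwiseDisjoint id ∧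
  P.biUnion id = R

/-- The number of `n`-ribbon tilings of a region `R`. -/
noncomputable def TilingCount (n : ℕ) (R : Finset (ℤ × ℤ)) : ℕ :=
  Set.ncard {P | IsTiling n R P}

/-- `s` is the root square of the tile `T`: its square of smallest level. -/
def IsRoot (T : Finset (ℤ × ℤ)) (s : ℤ × ℤ) : Prop :=
  s ∈ T ∧ ∀ t ∈ T, level s ≤ level t

/-- The set of root squares of the tiles of a tiling `P`. -/
def rootSet (P : Finset (Finset (ℤ × ℤ))) : Set (ℤ × ℤ) :=
  {s | ∃ T ∈ P, IsRoot T s}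

/-- The number `τ_l` of tiles of `P` whose root square has level `l`. -/
noncomputable def tilesAtLevel (P : Finset (Finset (ℤ × ℤ))) (l : ℤ) : ℕ :=
  (P.filter (fun T => ∃ s, IsRoot T s ∧ level s = l)).card

/-- The left-of relation on unit squares. -/
def LeftOf (s t : ℤ × ℤ) : Prop :=
  (level s = level t ∧ s.1 < t.1) ∨ (|level s - level t| = 1 ∧ s.1 ≤ t.1 ∧ t.2 ≤ s.2)

/-- The maximal number of `n`-ribbon tilings over all regions of area `a * n`. -/
noncomputable def maxT (n a : ℕ) : ℕ :=
  sSup {t : ℕ | ∃ R : Finset (ℤ × ℤ), R.card = a * n ∧ TilingCount n R = t}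

lemma ribbon_struct {n : ℕ} (hn : 0 < n) {T : Finset (ℤ × ℤ)} (hT : IsRibbon n T) :
    ∃ r : ℤ, (∀ s, IsRoot T s → level s = r) ∧ (∃ s, IsRoot T s ∧ level s = r) ∧
      ∀ l : ℤ, (T.filter (fun s => level s = l)).card
        = if ∃ j < n, l = r + (j : ℤ) then 1 else 0 := by
  obtain ⟨f, hstep, rfl⟩ := hT
  have hlev : ∀ i, i < n → level (f i) = level (f 0) + i := by
    intro i hi
    induction i with
    | zero => simp
    | succ i ih =>
      have h1 := hstep i hi
      have h2 := ih (by omega)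
      rcases h1 with h | h <;>
      · rw [h]
        simp only [level, Prod.fst_add, Prod.snd_add] at *
        push_cast
        omega
  have hmem : ∀ s, s ∈ (Finset.range n).image f ↔ ∃ i < n, f i = s := by
    intro s; simp [Finset.mem_image]
  have hf0 : f 0 ∈ (Finset.range n).image f := by
    rw [hmem]; exact ⟨0, hn, rfl⟩
  refine ⟨level (f 0), ?_, ?_, ?_⟩
  · rintro s ⟨hs, hmin⟩
    obtain ⟨i, hi, rfl⟩ := (hmem s).1 hs
    have := hmin (f 0) hf0
    have := hlev i hi
    omega
  · refine ⟨f 0, ⟨hf0, ?_⟩, rfl⟩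
    intro t ht
    obtain ⟨i, hi, rfl⟩ := (hmem t).1 ht
    have := hlev i hi
    omega
  · intro l
    by_cases h : ∃ j < n, l = level (f 0) + (j : ℤ)
    · obtain ⟨j, hj, rfl⟩ := h
      rw [if_pos ⟨j, hj, rfl⟩]
      have : ((Finset.range n).image f).filter (fun s => level s = level (f 0) + (j : ℤ))
          = {f j} := by
        apply Finset.eq_singleton_iff_unique_mem.2
        constructor
        · rw [Finset.mem_filter]
          exact ⟨(hmem _).2 ⟨j, hj, rfl⟩, hlev j hj⟩
        · intro s hs
          rw [Finset.mem_filter] at hs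
          obtain ⟨i, hi, rfl⟩ := (hmem s).1 hs.1
          have := hlev i hi
          have : i = j := by omega
          rw [this]
      rw [this, Finset.card_singleton]
    · rw [if_neg h]
      rw [Finset.card_eq_zero, Finset.filter_eq_empty_iff]
      intro s hs
      obtain ⟨i, hi, rfl⟩ := (hmem s).1 hs
      have := hlev i hi
      intro hc
      exact h ⟨i, hi, by omega⟩

lemma sigma_eq {n : ℕ} (hn : 0 < n) {R : Finset (ℤ × ℤ)} {P : Finset (Finset (ℤ × ℤ))}
    (hP : IsTiling n R P) (l : ℤ) :
    (R.filter (fun s => level s = l)).card = ∑ j ∈ Finset.range n, tilesAtLevel P (l - j) := by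
  obtain ⟨hrib, hdisj, hunion⟩ := hP
  rw [← hunion, Finset.filter_biUnion]
  rw [Finset.card_biUnion (by
    intro T hT T' hT' hne
    exact Finset.disjoint_filter_filter (hdisj hT hT' hne))]
  have hrhs : ∀ j : ℤ, tilesAtLevel P j
      = ∑ T ∈ P, if ∃ s, IsRoot T s ∧ level s = j then 1 else 0 := by
    intro j; rw [tilesAtLevel, Finset.card_filter]
  simp_rw [hrhs]
  rw [Finset.sum_comm]
  apply Finset.sum_congr rfl
  intro T hT
  obtain ⟨r, hr1, hr2, hr3⟩ := ribbon_struct hn (hrib T hT)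
  rw [show (id T) = T from rfl, hr3 l]
  have hcond : ∀ j : ℤ, (∃ s, IsRoot T s ∧ level s = j) ↔ j = r := by
    intro j
    constructor
    · rintro ⟨s, hs, rfl⟩; exact hr1 s hs
    · rintro rfl; exact hr2
  have : ∀ j ∈ Finset.range n,
      (if ∃ s, IsRoot T s ∧ level s = l - (j : ℤ) then 1 else 0)
        = if l - (j : ℤ) = r then 1 else 0 := by
    intro j _; simp [hcond]
  rw [Finset.sum_congr rfl this]
  rw [← Finset.card_filter]
  by_cases h : ∃ j < n, l = r + (j : ℤ)
  · rw [if_pos h]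
    obtain ⟨j0, hj0, hlr⟩ := h
    have : (Finset.range n).filter (fun j : ℕ => l - (j : ℤ) = r) = {j0} := by
      apply Finset.eq_singleton_iff_unique_mem.2
      refine ⟨Finset.mem_filter.2 ⟨Finset.mem_range.2 hj0, by omega⟩, ?_⟩
      intro j hj
      rw [Finset.mem_filter, Finset.mem_range] at hj
      omega
    simp [this]
  · rw [if_neg h]
    have : (Finset.range n).filter (fun j : ℕ => l - (j : ℤ) = r) = ∅ := by
      rw [Finset.filter_eq_empty_iff]
      intro j hj hc
      exact h ⟨j, Finset.mem_range.1 hj, by omega⟩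
    simp [this]

theorem tilesAtLevel_eq_and_tiling_independent (n : ℕ) (hn : 0 < n)
    (R : Finset (ℤ × ℤ)) (P : Finset (Finset (ℤ × ℤ))) (hP : IsTiling n R P) :
    (∀ l : ℤ, (R.filter (fun s => level s = l)).card
        = ∑ j ∈ Finset.range n, tilesAtLevel P (l - j)) ∧
    (∀ P' : Finset (Finset (ℤ × ℤ)), IsTiling n R P' →
        ∀ l : ℤ, tilesAtLevel P l = tilesAtLevel P' l) := by
  constructor
  · exact fun l => sigma_eq hn hP l
  · intro P' hP' l
    obtain ⟨L, hL⟩ : ∃ L : ℤ, ∀ s ∈ R, L ≤ level s := by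
      rcases R.eq_empty_or_nonempty with rfl | hne
      · exact ⟨0, by simp⟩
      · obtain ⟨s0, hs0⟩ := hne
        exact ⟨(R.image level).min' ⟨level s0, Finset.mem_image_of_mem _ hs0⟩,
          fun s hs => Finset.min'_le _ _ (Finset.mem_image_of_mem _ hs)⟩
    have hzero : ∀ (Q : Finset (Finset (ℤ × ℤ))), IsTiling n R Q →
        ∀ m : ℤ, m < L → tilesAtLevel Q m = 0 := by
      intro Q hQ m hm
      rw [tilesAtLevel, Finset.card_eq_zero, Finset.filter_eq_empty_iff]
      rintro T hT ⟨s, ⟨hsT, _⟩, hlev⟩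
      have hsR : s ∈ R := by
        rw [← hQ.2.2]; exact Finset.mem_biUnion.2 ⟨T, hT, hsT⟩
      have := hL s hsR; omega
    have key : ∀ k : ℕ, ∀ m : ℤ, m < L + k → tilesAtLevel P m = tilesAtLevel P' m := by
      intro k
      induction k with
      | zero => intro m hm; rw [hzero P hP m (by omega), hzero P' hP' m (by omega)]
      | succ k ih =>
        intro m hm
        by_cases hc : m < L + k
        · exact ih m hc
        · have hm' : m = L + k := by omega
          obtain ⟨n', rfl⟩ : ∃ n', n = n' + 1 := ⟨n - 1, by omega⟩
          have h1 := sigma_eq hn hP m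
          have h2 := sigma_eq hn hP' m
          rw [Finset.sum_range_succ'] at h1 h2
          have hs : ∑ j ∈ Finset.range n', tilesAtLevel P (m - ((j + 1 : ℕ) : ℤ))
              = ∑ j ∈ Finset.range n', tilesAtLevel P' (m - ((j + 1 : ℕ) : ℤ)) := by
            apply Finset.sum_congr rfl
            intro j hj
            apply ih
            push_cast
            omega
          simp only [Nat.cast_zero, sub_zero] at h1 h2
          omega
    exact key ((l - L).toNat + 1) l (by have := Int.self_le_toNat (l - L); omega)
end

section
/- The number of n-ribbon tilings of a region R of area A is at most C(A, A/n), the binomial coefficient choosing the A/n root squares from the A squares of R. -/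
attribute [local instance] Classical.propDecidable

namespace RibbonAux

abbrev Sq := ℤ × ℤ

lemma level_add_10 (s : Sq) : level (s + (1,0)) = level s + 1 := by
  simp [level, Prod.fst_add, Prod.snd_add]; ring

lemma level_add_01 (s : Sq) : level (s + (0,1)) = level s + 1 := by
  simp [level, Prod.fst_add, Prod.snd_add]; ring

section Ribbon

variable {n : ℕ} {f : ℕ → Sq}

lemma level_f (hf : ∀ i, i + 1 < n → f (i + 1) = f i + (1, 0) ∨ f (i + 1) = f i + (0, 1)) :
    ∀ i, i < n → level (f i) = level (f 0) + i := by
  intro i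
  induction i with
  | zero => simp
  | succ i ih =>
    intro h
    have hi : i < n := Nat.lt_of_succ_lt h
    rcases hf i h with h' | h' <;> rw [h']
    · rw [level_add_10, ih hi]; push_cast; ring
    · rw [level_add_01, ih hi]; push_cast; ring

lemma f_inj (hf : ∀ i, i + 1 < n → f (i + 1) = f i + (1, 0) ∨ f (i + 1) = f i + (0, 1))
    {i j : ℕ} (hi : i < n) (hj : j < n) (h : f i = f j) : i = j := by
  have h1 := level_f hf i hi
  have h2 := level_f hf j hj
  rw [h] at h1
  omega

lemma mem_ribbon {T : Finset Sq}
    (hT : T = (Finset.range n).image f) {s : Sq} :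
    s ∈ T ↔ ∃ i, i < n ∧ f i = s := by
  subst hT; simp [Finset.mem_image, Finset.mem_range]

lemma unique_level (hf : ∀ i, i + 1 < n → f (i + 1) = f i + (1, 0) ∨ f (i + 1) = f i + (0, 1))
    {T : Finset Sq} (hT : T = (Finset.range n).image f) {s t : Sq}
    (hs : s ∈ T) (ht : t ∈ T) (h : level s = level t) : s = t := by
  obtain ⟨i, hi, rfl⟩ := (mem_ribbon hT).1 hs
  obtain ⟨j, hj, rfl⟩ := (mem_ribbon hT).1 ht
  have h1 := level_f hf i hi
  have h2 := level_f hf j hj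
  have : i = j := by omega
  rw [this]

lemma root_iff (hf : ∀ i, i + 1 < n → f (i + 1) = f i + (1, 0) ∨ f (i + 1) = f i + (0, 1))
    {T : Finset Sq} (hT : T = (Finset.range n).image f) (hn : 0 < n) {s : Sq} :
    IsRoot T s ↔ s = f 0 := by
  constructor
  · rintro ⟨hsT, hmin⟩
    obtain ⟨i, hi, rfl⟩ := (mem_ribbon hT).1 hsT
    have h0 : f 0 ∈ T := (mem_ribbon hT).2 ⟨0, hn, rfl⟩
    have := hmin (f 0) h0
    have h1 := level_f hf i hi
    have : i = 0 := by omega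
    rw [this]
  · rintro rfl
    refine ⟨(mem_ribbon hT).2 ⟨0, hn, rfl⟩, ?_⟩
    intro t ht
    obtain ⟨j, hj, rfl⟩ := (mem_ribbon hT).1 ht
    have := level_f hf j hj
    omega

end Ribbon


/-- `t` is the square following `s` in its ribbon in the tiling `P`. -/
def Succ (P : Finset (Finset Sq)) (s t : Sq) : Prop :=
  ∃ T ∈ P, s ∈ T ∧ t ∈ T ∧ (t = s + (1, 0) ∨ t = s + (0, 1))

noncomputable def rootFn (T : Finset Sq) : Sq :=
  if h : ∃ s, IsRoot T s then h.choose else 0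

noncomputable def tileOf (P : Finset (Finset Sq)) (s : Sq) : Finset Sq :=
  if h : ∃ T ∈ P, s ∈ T then h.choose else ∅

/-- rank of a square within its tile. -/
noncomputable def rk (P : Finset (Finset Sq)) (s : Sq) : ℤ :=
  level s - level (rootFn (tileOf P s))

section Tiling

variable {n : ℕ} {R : Finset Sq} {P : Finset (Finset Sq)}

lemma tile_sub (hP : IsTiling n R P) {T : Finset Sq} (hT : T ∈ P) : T ⊆ R := by
  intro s hs
  rw [← hP.2.2]
  exact Finset.mem_biUnion.2 ⟨T, hT, hs⟩

lemma mem_R_iff (hP : IsTiling n R P) {s : Sq} : s ∈ R ↔ ∃ T ∈ P, s ∈ T := by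
  rw [← hP.2.2]; simp [Finset.mem_biUnion]

lemma tile_unique (hP : IsTiling n R P) {T T' : Finset Sq} (hT : T ∈ P) (hT' : T' ∈ P)
    {s : Sq} (hs : s ∈ T) (hs' : s ∈ T') : T = T' := by
  by_contra hne
  exact (Finset.disjoint_left.1 (hP.2.1 hT hT' hne)) hs hs'

lemma tileOf_spec (hP : IsTiling n R P) {s : Sq} (hs : s ∈ R) :
    tileOf P s ∈ P ∧ s ∈ tileOf P s := by
  have h : ∃ T ∈ P, s ∈ T := (mem_R_iff hP).1 hs
  rw [tileOf, dif_pos h]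
  exact ⟨h.choose_spec.1, h.choose_spec.2⟩

lemma tileOf_eq (hP : IsTiling n R P) {T : Finset Sq} (hT : T ∈ P) {s : Sq} (hs : s ∈ T) :
    tileOf P s = T := by
  have hsR : s ∈ R := tile_sub hP hT hs
  obtain ⟨h1, h2⟩ := tileOf_spec hP hsR
  exact tile_unique hP h1 hT h2 hs

lemma rootFn_isRoot {T : Finset Sq} (hn : 0 < n) (hrib : IsRibbon n T) :
    IsRoot T (rootFn T) := by
  obtain ⟨f, hf, hT⟩ := hrib
  have hex : ∃ s, IsRoot T s := ⟨f 0, (root_iff hf hT hn).2 rfl⟩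
  rw [rootFn, dif_pos hex]
  exact hex.choose_spec

lemma isRoot_eq_rootFn {T : Finset Sq} (hn : 0 < n) (hrib : IsRibbon n T) {s : Sq}
    (hs : IsRoot T s) : s = rootFn T := by
  obtain ⟨f, hf, hT⟩ := hrib
  have h1 := (root_iff hf hT hn).1 hs
  have h2 := (root_iff hf hT hn).1 (rootFn_isRoot hn ⟨f, hf, hT⟩)
  rw [h1, h2]

lemma succ_level {s t : Sq} (h : Succ P s t) : level t = level s + 1 := by
  obtain ⟨T, _, _, _, h | h⟩ := h <;> rw [h]
  · exact level_add_10 s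
  · exact level_add_01 s

lemma succ_mem_R (hP : IsTiling n R P) {s t : Sq} (h : Succ P s t) : s ∈ R ∧ t ∈ R := by
  obtain ⟨T, hT, hs, ht, _⟩ := h
  exact ⟨tile_sub hP hT hs, tile_sub hP hT ht⟩

lemma succ_unique (hP : IsTiling n R P) {s t t' : Sq} (h : Succ P s t) (h' : Succ P s t') :
    t = t' := by
  obtain ⟨T, hT, hsT, htT, hd⟩ := h
  obtain ⟨T', hT', hsT', htT', hd'⟩ := h'
  obtain rfl : T = T' := tile_unique hP hT hT' hsT hsT'
  obtain ⟨f, hf, hTf⟩ := hP.1 T hT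
  refine unique_level hf hTf htT htT' ?_
  have e1 : level t = level s + 1 := by
    rcases hd with h | h <;> rw [h]; exacts [level_add_10 s, level_add_01 s]
  have e2 : level t' = level s + 1 := by
    rcases hd' with h | h <;> rw [h]; exacts [level_add_10 s, level_add_01 s]
  rw [e1, e2]

lemma pred_unique (hP : IsTiling n R P) {s s' t : Sq} (h : Succ P s t) (h' : Succ P s' t) :
    s = s' := by
  obtain ⟨T, hT, hsT, htT, hd⟩ := h
  obtain ⟨T', hT', hsT', htT', hd'⟩ := h'
  obtain rfl : T = T' := tile_unique hP hT hT' htT htT'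
  obtain ⟨f, hf, hTf⟩ := hP.1 T hT
  refine unique_level hf hTf hsT hsT' ?_
  have e1 : level t = level s + 1 := by
    rcases hd with h | h <;> rw [h]; exacts [level_add_10 s, level_add_01 s]
  have e2 : level t = level s' + 1 := by
    rcases hd' with h | h <;> rw [h]; exacts [level_add_10 s', level_add_01 s']
  omega

lemma pred_cases {s t : Sq} (h : Succ P s t) : s = t - (1, 0) ∨ s = t - (0, 1) := by
  obtain ⟨T, _, _, _, h | h⟩ := h
  · left; rw [h]; abel
  · right; rw [h]; abel

lemma root_iff_no_pred (hP : IsTiling n R P) (hn : 0 < n) {s : Sq} (hs : s ∈ R) :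
    (∃ T ∈ P, IsRoot T s) ↔ ¬ ∃ p, Succ P p s := by
  obtain ⟨hTP, hsT⟩ := tileOf_spec hP hs
  obtain ⟨f, hf, hTf⟩ := hP.1 _ hTP
  constructor
  · rintro ⟨T', hT', hroot⟩ ⟨p, hsucc⟩
    obtain rfl : T' = tileOf P s := tile_unique hP hT' hTP hroot.1 hsT
    have h0 : s = f 0 := (root_iff hf hTf hn).1 hroot
    obtain ⟨T2, hT2, hpT2, hsT2, hd⟩ := hsucc
    obtain rfl : T2 = tileOf P s := tile_unique hP hT2 hTP hsT2 hsT
    obtain ⟨j, hj, rfl⟩ := (mem_ribbon hTf).1 hpT2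
    have hls : level s = level (f j) + 1 := by
      rcases hd with h | h <;> rw [h]; exacts [level_add_10 _, level_add_01 _]
    have h1 := level_f hf j hj
    have h2 : level s = level (f 0) := by rw [h0]
    omega
  · intro hnp
    obtain ⟨i, hi, hfi⟩ := (mem_ribbon hTf).1 hsT
    rcases Nat.eq_zero_or_pos i with rfl | hpos
    · exact ⟨tileOf P s, hTP, hfi ▸ (root_iff hf hTf hn).2 rfl⟩
    · exfalso
      apply hnp
      obtain ⟨j, rfl⟩ : ∃ j, i = j + 1 := ⟨i - 1, by omega⟩
      refine ⟨f j, ⟨tileOf P s, hTP, (mem_ribbon hTf).2 ⟨j, by omega, rfl⟩, hsT, ?_⟩⟩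
      rcases hf j hi with h | h <;> rw [← hfi, h] <;> simp
variable {Q : Finset (Finset Sq)}

lemma rk_index (hP : IsTiling n R P) (hn : 0 < n) {T : Finset Sq} (hT : T ∈ P)
    {f : ℕ → Sq} (hf : ∀ i, i + 1 < n → f (i + 1) = f i + (1, 0) ∨ f (i + 1) = f i + (0, 1))
    (hTf : T = (Finset.range n).image f) {i : ℕ} (hi : i < n) :
    rk P (f i) = i := by
  have hmem : f i ∈ T := (mem_ribbon hTf).2 ⟨i, hi, rfl⟩
  have htile : tileOf P (f i) = T := tileOf_eq hP hT hmem
  have hroot : rootFn T = f 0 :=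
    (root_iff hf hTf hn).1 (rootFn_isRoot hn ⟨f, hf, hTf⟩)
  rw [rk, htile, hroot, level_f hf i hi]
  ring

lemma rk_bounds (hP : IsTiling n R P) (hn : 0 < n) {s : Sq} (hs : s ∈ R) :
    0 ≤ rk P s ∧ rk P s ≤ (n : ℤ) - 1 := by
  obtain ⟨hTP, hsT⟩ := tileOf_spec hP hs
  obtain ⟨f, hf, hTf⟩ := hP.1 _ hTP
  obtain ⟨i, hi, rfl⟩ := (mem_ribbon hTf).1 hsT
  rw [rk_index hP hn hTP hf hTf hi]
  omega

lemma rk_zero_iff (hP : IsTiling n R P) (hn : 0 < n) {s : Sq} (hs : s ∈ R) :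
    rk P s = 0 ↔ ∃ T ∈ P, IsRoot T s := by
  obtain ⟨hTP, hsT⟩ := tileOf_spec hP hs
  obtain ⟨f, hf, hTf⟩ := hP.1 _ hTP
  obtain ⟨i, hi, rfl⟩ := (mem_ribbon hTf).1 hsT
  rw [rk_index hP hn hTP hf hTf hi]
  constructor
  · intro h
    have : i = 0 := by omega
    subst this
    exact ⟨tileOf P (f 0), hTP, (root_iff hf hTf hn).2 rfl⟩
  · rintro ⟨T', hT', hroot⟩
    obtain rfl : T' = tileOf P (f i) := tile_unique hP hT' hTP hroot.1 hsT
    have h0 : f i = f 0 := (root_iff hf hTf hn).1 hroot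
    have : i = 0 := f_inj hf hi hn h0
    omega

lemma rk_succ (hP : IsTiling n R P) {s t : Sq} (h : Succ P s t) :
    rk P t = rk P s + 1 := by
  obtain ⟨T, hT, hsT, htT, _⟩ := h.imp (fun T hT => hT)
  have h1 : tileOf P s = T := tileOf_eq hP hT hsT
  have h2 : tileOf P t = T := tileOf_eq hP hT htT
  have h3 : level t = level s + 1 := succ_level h
  rw [rk, rk, h1, h2, h3]
  ring

lemma exists_succ_of_rk (hP : IsTiling n R P) (hn : 0 < n) {s : Sq} (hs : s ∈ R)
    (h : rk P s < (n : ℤ) - 1) : ∃ t, Succ P s t := by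
  obtain ⟨hTP, hsT⟩ := tileOf_spec hP hs
  obtain ⟨f, hf, hTf⟩ := hP.1 _ hTP
  obtain ⟨i, hi, rfl⟩ := (mem_ribbon hTf).1 hsT
  rw [rk_index hP hn hTP hf hTf hi] at h
  have hi1 : i + 1 < n := by omega
  refine ⟨f (i + 1), tileOf P (f i), hTP, hsT, (mem_ribbon hTf).2 ⟨i + 1, hi1, rfl⟩, ?_⟩
  exact hf i hi1

lemma rk_eq_of_no_succ (hP : IsTiling n R P) (hn : 0 < n) {s : Sq} (hs : s ∈ R)
    (h : ¬ ∃ t, Succ P s t) : rk P s = (n : ℤ) - 1 := by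
  have h1 := rk_bounds hP hn hs
  by_contra hne
  exact h (exists_succ_of_rk hP hn hs (by omega))

lemma no_succ_of_rk (hP : IsTiling n R P) (hn : 0 < n) {s : Sq} (hs : s ∈ R)
    (h : rk P s = (n : ℤ) - 1) : ¬ ∃ t, Succ P s t := by
  rintro ⟨t, ht⟩
  have h1 : rk P t = rk P s + 1 := rk_succ hP ht
  have h2 := (rk_bounds hP hn (succ_mem_R hP ht).2).2
  omega

lemma rk_agree (hP : IsTiling n R P) (hQ : IsTiling n R Q) (hn : 0 < n)
    (hroots : ∀ s, (∃ T ∈ P, IsRoot T s) ↔ (∃ T ∈ Q, IsRoot T s))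
    (l : ℤ) (hlow : ∀ t s, level t < l → (Succ P s t ↔ Succ Q s t)) :
    ∀ k : ℕ, ∀ s, s ∈ R → level s < l → rk P s = k → rk Q s = k := by
  intro k
  induction k with
  | zero =>
    intro s hs hlev h
    push_cast at h ⊢
    exact (rk_zero_iff hQ hn hs).2 ((hroots s).1 ((rk_zero_iff hP hn hs).1 h))
  | succ k ih =>
    intro s hs hlev h
    have hnroot : ¬ ∃ T ∈ P, IsRoot T s := by
      intro hr
      have := (rk_zero_iff hP hn hs).2 hr
      omega
    have hpred : ∃ p, Succ P p s := by
      by_contra hnp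
      exact hnroot ((root_iff_no_pred hP hn hs).2 hnp)
    obtain ⟨p, hp⟩ := hpred
    have hpQ : Succ Q p s := (hlow s p hlev).1 hp
    have hps : rk P s = rk P p + 1 := rk_succ hP hp
    have hpk : rk P p = k := by push_cast at h; omega
    have hpR : p ∈ R := (succ_mem_R hP hp).1
    have hplev : level p < l := by
      have := succ_level hp
      omega
    have := ih p hpR hplev hpk
    have := rk_succ hQ hpQ
    push_cast
    omega

lemma rk_agree' (hP : IsTiling n R P) (hQ : IsTiling n R Q) (hn : 0 < n)
    (hroots : ∀ s, (∃ T ∈ P, IsRoot T s) ↔ (∃ T ∈ Q, IsRoot T s))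
    (l : ℤ) (hlow : ∀ t s, level t < l → (Succ P s t ↔ Succ Q s t))
    {s : Sq} (hs : s ∈ R) (hlev : level s < l) : rk Q s = rk P s := by
  have h0 := (rk_bounds hP hn hs).1
  have hk : rk P s = ((rk P s).toNat : ℤ) := (Int.toNat_of_nonneg h0).symm
  rw [hk]
  exact rk_agree hP hQ hn hroots l hlow (rk P s).toNat s hs hlev hk

lemma sq_arith1 (t : Sq) : t - (1, 0) + (1, 0) = t := by ring
lemma sq_arith2 (t : Sq) : t - (1, 0) + (0, 1) = t + (-1, 1) := by
  rw [Prod.ext_iff]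
  constructor <;> simp <;> ring
lemma sq_arith3 (t : Sq) : t + (-1, 1) - (0, 1) = t - (1, 0) := by
  rw [Prod.ext_iff]
  constructor <;> simp <;> ring
lemma sq_ne (t : Sq) : t + (-1, 1) ≠ t := by
  intro h
  have := congrArg Prod.fst h
  simp at this

lemma level_shift (t : Sq) : level (t + (-1, 1)) = level t := by
  simp [level]; ring

lemma chain_contra (hP : IsTiling n R P) (hQ : IsTiling n R Q) (hn : 0 < n)
    (hroots : ∀ s, (∃ T ∈ P, IsRoot T s) ↔ (∃ T ∈ Q, IsRoot T s))
    (l : ℤ) (hlow : ∀ t s, level t < l → (Succ P s t ↔ Succ Q s t))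
    {t0 : Sq} (h1 : Succ P (t0 - (0, 1)) t0) (h2 : Succ Q (t0 - (1, 0)) t0)
    (hl : level t0 = l) : False := by
  set pat : Sq → Prop :=
    fun t => Succ P (t - (0, 1)) t ∧ Succ Q (t - (1, 0)) t ∧ level t = l with hpat
  have step : ∀ t, pat t → pat (t + (-1, 1)) := by
    rintro t ⟨hp, hq, hlt⟩
    set w := t - (1, 0) with hw
    have hwR : w ∈ R := (succ_mem_R hQ hq).1
    have hlevt : level t = level w + 1 := succ_level hq
    have hlw : level w = l - 1 := by omega
    by_cases hA : ∃ u, Succ P w u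
    · obtain ⟨u, hu⟩ := hA
      have hdir : u = w + (1, 0) ∨ u = w + (0, 1) := by
        obtain ⟨T, _, _, _, hd⟩ := hu
        exact hd
      rcases hdir with hd | hd
      · exfalso
        rw [hw, sq_arith1] at hd
        subst hd
        have : w = u - (0, 1) := pred_unique hP hu hp
        rw [hw] at this
        have := congrArg Prod.fst this
        simp at this
      · have hut : u = t + (-1, 1) := by rw [hd, hw, sq_arith2]
        subst hut
        refine ⟨?_, ?_, ?_⟩
        · rw [sq_arith3]
          exact hu
        · -- find pred in Q
          have huR : t + (-1, 1) ∈ R := (succ_mem_R hP hu).2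
          have hnroot : ¬ ∃ T ∈ P, IsRoot T (t + (-1, 1)) := by
            intro hr
            exact (root_iff_no_pred hP hn huR).1 hr ⟨w, hu⟩
          have hnrootQ : ¬ ∃ T ∈ Q, IsRoot T (t + (-1, 1)) := fun h => hnroot ((hroots _).2 h)
          have hpredQ : ∃ p, Succ Q p (t + (-1, 1)) := by
            by_contra hnp
            exact hnrootQ ((root_iff_no_pred hQ hn huR).2 hnp)
          obtain ⟨p, hpq⟩ := hpredQ
          rcases pred_cases hpq with hd' | hd'
          · rw [hd'] at hpq; exact hpq
          · exfalso
            have hpw : p = w := by rw [hd', sq_arith3, hw]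
            rw [hpw] at hpq
            have := succ_unique hQ hpq hq
            exact sq_ne t this
        · rw [level_shift]; exact hlt
    · exfalso
      have hrkP : rk P w = (n : ℤ) - 1 := rk_eq_of_no_succ hP hn hwR hA
      have hrkQ : rk Q w = rk P w := rk_agree' hP hQ hn hroots l hlow hwR (by omega)
      exact no_succ_of_rk hQ hn hwR (hrkQ.trans hrkP) ⟨t, hq⟩
  -- iterate
  set g : ℕ → Sq := fun i => (t0.1 - i, t0.2 + i) with hg
  have hgstep : ∀ i, g (i + 1) = g i + (-1, 1) := by
    intro i
    rw [hg]
    simp [Prod.ext_iff]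
    push_cast
    constructor <;> ring
  have hgpat : ∀ i, pat (g i) := by
    intro i
    induction i with
    | zero =>
      have : g 0 = t0 := by simp [hg]
      rw [this]
      exact ⟨h1, h2, hl⟩
    | succ i ih =>
      rw [hgstep i]
      exact step _ ih
  have hgR : ∀ i, g i ∈ R := fun i => (succ_mem_R hQ (hgpat i).2.1).2
  have hginj : Function.Injective g := by
    intro i j h
    have := congrArg Prod.fst h
    simp [hg] at this
    omega
  have hfin : (Set.range g).Finite := Set.Finite.subset R.finite_toSet (by
    rintro x ⟨i, rfl⟩; exact hgR i)
  exact Set.infinite_range_of_injective hginj hfin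

lemma succ_eq (hP : IsTiling n R P) (hQ : IsTiling n R Q) (hn : 0 < n)
    (hroots : ∀ s, (∃ T ∈ P, IsRoot T s) ↔ (∃ T ∈ Q, IsRoot T s)) :
    ∀ s t, Succ P s t ↔ Succ Q s t := by
  by_contra hcon
  push_neg at hcon
  obtain ⟨s1, t1, hd1⟩ := hcon
  have hne1 : ¬ (Succ P s1 t1 ↔ Succ Q s1 t1) := by tauto
  classical
  set Dset : Finset Sq := R.filter (fun t => ∃ s, ¬ (Succ P s t ↔ Succ Q s t)) with hD
  have memR_of_ne : ∀ s t, ¬ (Succ P s t ↔ Succ Q s t) → t ∈ R := by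
    intro s t h
    rcases Classical.em (Succ P s t) with hp | hp
    · exact (succ_mem_R hP hp).2
    · rcases Classical.em (Succ Q s t) with hq | hq
      · exact (succ_mem_R hQ hq).2
      · exact absurd (iff_of_false hp hq) h
  have hne : Dset.Nonempty :=
    ⟨t1, Finset.mem_filter.2 ⟨memR_of_ne s1 t1 hne1, s1, hne1⟩⟩
  obtain ⟨t0, ht0, hmin⟩ := Finset.exists_min_image Dset level hne
  set l := level t0 with hl
  have hlow : ∀ t s, level t < l → (Succ P s t ↔ Succ Q s t) := by
    intro t s hlev
    by_contra h
    have : t ∈ Dset := Finset.mem_filter.2 ⟨memR_of_ne s t h, s, h⟩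
    have := hmin t this
    omega
  obtain ⟨ht0R, s0, hne0⟩ := Finset.mem_filter.1 ht0
  -- get preds in both tilings, distinct
  have hkey : ∃ p q, Succ P p t0 ∧ Succ Q q t0 ∧ p ≠ q := by
    rcases Classical.em (Succ P s0 t0) with hp | hp
    · have hq : ¬ Succ Q s0 t0 := fun h => hne0 (iff_of_true hp h)
      have hnr : ¬ ∃ T ∈ Q, IsRoot T t0 := by
        intro hr
        exact (root_iff_no_pred hP hn ht0R).1 ((hroots t0).2 hr) ⟨s0, hp⟩
      have : ∃ q, Succ Q q t0 := by
        by_contra hnp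
        exact hnr ((root_iff_no_pred hQ hn ht0R).2 hnp)
      obtain ⟨q, hqq⟩ := this
      exact ⟨s0, q, hp, hqq, fun h => hq (by rw [h]; exact hqq)⟩
    · have hq : Succ Q s0 t0 := by
        rcases Classical.em (Succ Q s0 t0) with h | h
        · exact h
        · exact absurd (iff_of_false hp h) hne0
      have hnr : ¬ ∃ T ∈ P, IsRoot T t0 := by
        intro hr
        exact (root_iff_no_pred hQ hn ht0R).1 ((hroots t0).1 hr) ⟨s0, hq⟩
      have : ∃ p, Succ P p t0 := by
        by_contra hnp
        exact hnr ((root_iff_no_pred hP hn ht0R).2 hnp)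
      obtain ⟨p, hpp⟩ := this
      exact ⟨p, s0, hpp, hq, fun h => hp (by rw [← h]; exact hpp)⟩
  obtain ⟨p, q, hpp, hqq, hpq⟩ := hkey
  rcases pred_cases hpp with hp1 | hp1 <;> rcases pred_cases hqq with hq1 | hq1
  · exact hpq (hp1.trans hq1.symm)
  · -- p = t0 - (1,0), q = t0 - (0,1) : apply swapped
    subst hp1; subst hq1
    exact chain_contra hQ hP hn (fun s => (hroots s).symm) l
      (fun t s h => (hlow t s h).symm) hqq hpp rfl
  · subst hp1; subst hq1
    exact chain_contra hP hQ hn hroots l hlow hpp hqq rfl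
  · exact hpq (hp1.trans hq1.symm)

lemma tiling_subset (hP : IsTiling n R P) (hQ : IsTiling n R Q) (hn : 0 < n)
    (hroots : ∀ s, (∃ T ∈ P, IsRoot T s) ↔ (∃ T ∈ Q, IsRoot T s))
    (hsucc : ∀ s t, Succ P s t ↔ Succ Q s t) : P ⊆ Q := by
  intro T hT
  obtain ⟨f, hf, hTf⟩ := hP.1 T hT
  have hr : IsRoot T (f 0) := (root_iff hf hTf hn).2 rfl
  obtain ⟨T', hT'Q, hr'⟩ := (hroots (f 0)).1 ⟨T, hT, hr⟩
  obtain ⟨g, hg, hTg⟩ := hQ.1 T' hT'Q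
  have h0 : f 0 = g 0 := (root_iff hg hTg hn).1 hr'
  have key : ∀ i, i < n → f i = g i := by
    intro i
    induction i with
    | zero => intro _; exact h0
    | succ i ih =>
      intro h
      have hi : i < n := Nat.lt_of_succ_lt h
      have e := ih hi
      have sp : Succ P (f i) (f (i + 1)) :=
        ⟨T, hT, (mem_ribbon hTf).2 ⟨i, hi, rfl⟩, (mem_ribbon hTf).2 ⟨i + 1, h, rfl⟩, hf i h⟩
      have sq : Succ Q (g i) (g (i + 1)) :=
        ⟨T', hT'Q, (mem_ribbon hTg).2 ⟨i, hi, rfl⟩, (mem_ribbon hTg).2 ⟨i + 1, h, rfl⟩, hg i h⟩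
      have sq' : Succ Q (f i) (f (i + 1)) := (hsucc _ _).1 sp
      rw [e] at sq'
      exact succ_unique hQ sq' sq
  have hTT' : T = T' := by
    rw [hTf, hTg]
    ext s
    simp only [Finset.mem_image, Finset.mem_range]
    constructor
    · rintro ⟨i, hi, rfl⟩
      exact ⟨i, hi, (key i hi).symm⟩
    · rintro ⟨i, hi, rfl⟩
      exact ⟨i, hi, key i hi⟩
  exact hTT' ▸ hT'Q

lemma tiling_ext (hP : IsTiling n R P) (hQ : IsTiling n R Q) (hn : 0 < n)
    (hroots : ∀ s, (∃ T ∈ P, IsRoot T s) ↔ (∃ T ∈ Q, IsRoot T s)) : P = Q := by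
  have hsucc := succ_eq hP hQ hn hroots
  refine Finset.Subset.antisymm (tiling_subset hP hQ hn hroots hsucc) ?_
  exact tiling_subset hQ hP hn (fun s => (hroots s).symm) (fun s t => (hsucc s t).symm)

lemma card_tile (hn : 0 < n) {T : Finset Sq} (hrib : IsRibbon n T) : T.card = n := by
  obtain ⟨f, hf, hTf⟩ := hrib
  rw [hTf, Finset.card_image_of_injOn, Finset.card_range]
  intro i hi j hj h
  exact f_inj hf (Finset.mem_range.1 hi) (Finset.mem_range.1 hj) h

lemma card_R_eq (hP : IsTiling n R P) (hn : 0 < n) : R.card = P.card * n := by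
  rw [← hP.2.2, Finset.card_biUnion]
  · calc ∑ u ∈ P, (id u).card = ∑ _u ∈ P, n :=
          Finset.sum_congr rfl (fun T hT => card_tile hn (hP.1 T hT))
      _ = P.card * n := by rw [Finset.sum_const, smul_eq_mul]
  · intro x hx y hy hxy
    exact hP.2.1 (by simpa using hx) (by simpa using hy) hxy

lemma rootFn_mem_tile (hP : IsTiling n R P) (hn : 0 < n) {T : Finset Sq} (hT : T ∈ P) :
    rootFn T ∈ T :=
  (rootFn_isRoot hn (hP.1 T hT)).1

lemma rootFn_injOn (hP : IsTiling n R P) (hn : 0 < n) : Set.InjOn rootFn ↑P := by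
  intro T hT T' hT' heq
  exact tile_unique hP (Finset.mem_coe.1 hT) (Finset.mem_coe.1 hT')
    (rootFn_mem_tile hP hn (Finset.mem_coe.1 hT))
    (by rw [heq]; exact rootFn_mem_tile hP hn (Finset.mem_coe.1 hT'))

lemma image_rootFn_mem (hP : IsTiling n R P) (hn : 0 < n) :
    P.image rootFn ∈ R.powersetCard (R.card / n) := by
  refine Finset.mem_powersetCard.2 ⟨?_, ?_⟩
  · intro s hs
    obtain ⟨T, hT, rfl⟩ := Finset.mem_image.1 hs
    exact tile_sub hP hT (rootFn_mem_tile hP hn hT)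
  · rw [Finset.card_image_of_injOn (rootFn_injOn hP hn)]
    rw [card_R_eq hP hn, Nat.mul_div_cancel _ hn]

lemma root_mem_image_iff (hP : IsTiling n R P) (hn : 0 < n) {s : Sq} :
    (∃ T ∈ P, IsRoot T s) ↔ s ∈ P.image rootFn := by
  constructor
  · rintro ⟨T, hT, hr⟩
    exact Finset.mem_image.2 ⟨T, hT, (isRoot_eq_rootFn hn (hP.1 T hT) hr).symm⟩
  · intro hs
    obtain ⟨T, hT, rfl⟩ := Finset.mem_image.1 hs
    exact ⟨T, hT, rootFn_isRoot hn (hP.1 T hT)⟩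

end Tiling

end RibbonAux

open RibbonAux in
theorem tilingCount_le_choose (n : ℕ) (hn : 0 < n) (R : Finset (ℤ × ℤ)) (A : ℕ)
    (hA : R.card = A) (hex : ∃ P, IsTiling n R P) :
    TilingCount n R ≤ Nat.choose A (A / n) := by
  classical
  subst hA
  set S : Set (Finset (Finset (ℤ × ℤ))) := {P | IsTiling n R P} with hS
  set F : Finset (Finset (ℤ × ℤ)) → Finset (ℤ × ℤ) := fun P => P.image rootFn with hF
  have hinj : Set.InjOn F S := by
    intro P hP Q hQ heq
    refine tiling_ext hP hQ hn ?_
    intro s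
    rw [root_mem_image_iff hP hn, root_mem_image_iff hQ hn]
    show s ∈ F P ↔ s ∈ F Q
    rw [heq]
  have himg : F '' S ⊆ ↑(R.powersetCard (R.card / n)) := by
    rintro x ⟨P, hP, rfl⟩
    exact image_rootFn_mem hP hn
  calc TilingCount n R = S.ncard := rfl
    _ = (F '' S).ncard := (Set.ncard_image_of_injOn hinj).symm
    _ ≤ (↑(R.powersetCard (R.card / n)) : Set (Finset (ℤ × ℤ))).ncard :=
        Set.ncard_le_ncard himg (R.powersetCard _).finite_toSet
    _ = (R.powersetCard (R.card / n)).card := Set.ncard_coe_finset _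
    _ = R.card.choose (R.card / n) := Finset.card_powersetCard _ _
end

section
/- In an n-ribbon tiling, two tiles T_1 ≠ T_2 cannot satisfy both T_1 ≺ T_2 and T_2 ≺ T_1, where T_1 ≺ T_2 means some square of T_1 is left-of some square of T_2. -/
attribute [local instance] Classical.propDecidable

def Steps (n : ℕ) (f : ℕ → ℤ × ℤ) : Prop :=
  ∀ i, i + 1 < n → f (i + 1) = f i + (1, 0) ∨ f (i + 1) = f i + (0, 1)

lemma step_facts {n f} (hf : Steps n f) {i : ℕ} (h : i + 1 < n) :
    ((f (i+1)).1 = (f i).1 + 1 ∧ (f (i+1)).2 = (f i).2) ∨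
    ((f (i+1)).1 = (f i).1 ∧ (f (i+1)).2 = (f i).2 + 1) := by
  rcases hf i h with h' | h' <;> [left; right] <;> simp [h']

lemma ribbon_level {n f} (hf : Steps n f) : ∀ i, i < n → level (f i) = level (f 0) + i := by
  intro i
  induction i with
  | zero => simp
  | succ k ih =>
    intro h
    have hk := ih (by omega)
    have := step_facts hf h
    unfold level at *
    rcases this with ⟨a, b⟩ | ⟨a, b⟩ <;> push_cast <;> omega

lemma sq_eq {s t : ℤ × ℤ} (hl : level s = level t) (hx : s.1 = t.1) : s = t := by
  apply Prod.ext hx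
  unfold level at hl; omega

lemma prop_step {n f g} (hf : Steps n f) (hg : Steps n g)
    (Hd : ∀ i j, i < n → j < n → f i ≠ g j)
    {i j : ℕ} (hi : i + 1 < n) (hj : j + 1 < n)
    (hl : level (f i) = level (g j)) (hx : (f i).1 < (g j).1) :
    level (f (i+1)) = level (g (j+1)) ∧ (f (i+1)).1 < (g (j+1)).1 := by
  have s1 := step_facts hf hi
  have s2 := step_facts hg hj
  have hlev : level (f (i+1)) = level (g (j+1)) := by
    unfold level at *
    rcases s1 with ⟨a, b⟩ | ⟨a, b⟩ <;> rcases s2 with ⟨c, d⟩ | ⟨c, d⟩ <;> omega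
  refine ⟨hlev, ?_⟩
  have hle : (f (i+1)).1 ≤ (g (j+1)).1 := by
    rcases s1 with ⟨a, b⟩ | ⟨a, b⟩ <;> rcases s2 with ⟨c, d⟩ | ⟨c, d⟩ <;> omega
  exact lt_of_le_of_ne hle (fun h => Hd _ _ hi hj (sq_eq hlev h))

lemma prop_many {n f g} (hf : Steps n f) (hg : Steps n g)
    (Hd : ∀ i j, i < n → j < n → f i ≠ g j) :
    ∀ (k i j : ℕ), i + k < n → j + k < n →
      level (f i) = level (g j) → (f i).1 < (g j).1 →
      level (f (i+k)) = level (g (j+k)) ∧ (f (i+k)).1 < (g (j+k)).1 := by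
  intro k
  induction k with
  | zero => intro i j _ _ hl hx; exact ⟨hl, hx⟩
  | succ m ih =>
    intro i j hi hj hl hx
    have h := ih i j (by omega) (by omega) hl hx
    have := prop_step hf hg Hd (i := i + m) (j := j + m) (by omega) (by omega) h.1 h.2
    constructor
    · have e1 : i + (m+1) = (i+m) + 1 := by omega
      have e2 : j + (m+1) = (j+m) + 1 := by omega
      rw [e1, e2]; exact this.1
    · have e1 : i + (m+1) = (i+m) + 1 := by omega
      have e2 : j + (m+1) = (j+m) + 1 := by omega
      rw [e1, e2]; exact this.2

lemma keyA {n f g} (hf : Steps n f) (hg : Steps n g)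
    (Hd : ∀ i j, i < n → j < n → f i ≠ g j)
    {i j : ℕ} (hi : i < n) (hj : j < n) (h : LeftOf (f i) (g j)) :
    (∃ i' j', i' < n ∧ j' < n ∧ level (f i') = level (g j') ∧ (f i').1 < (g j').1)
    ∨ (level (g 0) = level (f (n-1)) + 1 ∧ (f (n-1)).1 ≤ (g 0).1 ∧ (g 0).2 ≤ (f (n-1)).2)
    ∨ (level (g (n-1)) = level (f 0) - 1 ∧ (f 0).1 ≤ (g (n-1)).1 ∧ (g (n-1)).2 ≤ (f 0).2) := by
  rcases h with ⟨hl, hx⟩ | ⟨habs, hx, hy⟩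
  · exact Or.inl ⟨i, j, hi, hj, hl, hx⟩
  rcases abs_eq (by norm_num : (0:ℤ) ≤ 1) |>.mp habs with hcase | hcase
  · -- level (f i) = level (g j) + 1, i.e. f i is one level ABOVE g j
    -- (case 2b in informal notes)
    by_cases hi0 : i = 0
    · subst hi0
      by_cases hjn : j = n - 1
      · subst hjn
        right; right
        exact ⟨by omega, hx, hy⟩
      · -- j + 1 < n: use g (j+1) at level of f 0
        have hj1 : j + 1 < n := by omega
        have s2 := step_facts hg hj1
        have hlev : level (f 0) = level (g (j+1)) := by
          unfold level at *
          rcases s2 with ⟨c, d⟩ | ⟨c, d⟩ <;> omega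
        have hle : (f 0).1 ≤ (g (j+1)).1 := by
          rcases s2 with ⟨c, d⟩ | ⟨c, d⟩ <;> omega
        have : (f 0).1 < (g (j+1)).1 :=
          lt_of_le_of_ne hle (fun h => Hd _ _ hi hj1 (sq_eq hlev h))
        exact Or.inl ⟨0, j+1, hi, hj1, hlev, this⟩
    · -- i ≥ 1 : use f (i-1) at level of g j
      obtain ⟨m, rfl⟩ : ∃ m, i = m + 1 := ⟨i - 1, by omega⟩
      have s1 := step_facts hf hi
      have hlev : level (f m) = level (g j) := by
        unfold level at *
        rcases s1 with ⟨a, b⟩ | ⟨a, b⟩ <;> omega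
      have hle : (f m).1 ≤ (g j).1 := by
        rcases s1 with ⟨a, b⟩ | ⟨a, b⟩ <;> omega
      have : (f m).1 < (g j).1 :=
        lt_of_le_of_ne hle (fun h => Hd _ _ (by omega) hj (sq_eq hlev h))
      exact Or.inl ⟨m, j, by omega, hj, hlev, this⟩
  · -- level (f i) = level (g j) - 1 : g j one level above f i (case 2a)
    by_cases hj0 : j = 0
    · subst hj0
      by_cases hin : i = n - 1
      · subst hin
        right; left
        exact ⟨by omega, hx, hy⟩
      · have hi1 : i + 1 < n := by omega
        have s1 := step_facts hf hi1
        have hlev : level (f (i+1)) = level (g 0) := by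
          unfold level at *
          rcases s1 with ⟨a, b⟩ | ⟨a, b⟩ <;> omega
        have hle : (f (i+1)).1 ≤ (g 0).1 := by
          -- via y: y_f(i+1) ≥ y_f i ≥ y_g 0, level equality
          unfold level at hlev
          rcases s1 with ⟨a, b⟩ | ⟨a, b⟩ <;> omega
        have : (f (i+1)).1 < (g 0).1 :=
          lt_of_le_of_ne hle (fun h => Hd _ _ hi1 hj (sq_eq hlev h))
        exact Or.inl ⟨i+1, 0, hi1, hj, hlev, this⟩
    · obtain ⟨m, rfl⟩ : ∃ m, j = m + 1 := ⟨j - 1, by omega⟩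
      have s2 := step_facts hg hj
      have hlev : level (f i) = level (g m) := by
        unfold level at *
        rcases s2 with ⟨c, d⟩ | ⟨c, d⟩ <;> omega
      have hle : (f i).1 ≤ (g m).1 := by
        unfold level at hlev
        rcases s2 with ⟨c, d⟩ | ⟨c, d⟩ <;> omega
      have : (f i).1 < (g m).1 :=
        lt_of_le_of_ne hle (fun h => Hd _ _ hi (by omega) (sq_eq hlev h))
      exact Or.inl ⟨i, m, hi, by omega, hlev, this⟩

lemma ribbons_antisym {n : ℕ} {f g : ℕ → ℤ × ℤ} (hf : Steps n f) (hg : Steps n g)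
    (Hd : ∀ i j, i < n → j < n → f i ≠ g j)
    {i j i' j' : ℕ} (hi : i < n) (hj : j < n) (hi' : i' < n) (hj' : j' < n)
    (h1 : LeftOf (f i) (g j)) (h2 : LeftOf (g i') (f j')) : False := by
  have Hd' : ∀ i j, i < n → j < n → g i ≠ f j := fun i j hi hj h => Hd j i hj hi h.symm
  have hn : 0 < n := by omega
  have hn1 : n - 1 < n := by omega
  have La := ribbon_level hf
  have Lb := ribbon_level hg
  have A := keyA hf hg Hd hi hj h1
  have B := keyA hg hf Hd' hi' hj' h2
  rcases A with ⟨i0, j0, hi0, hj0, hl0, hx0⟩ | ⟨e1, ex1, ey1⟩ | ⟨e2, ex2, ey2⟩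
  · rcases B with ⟨i1, j1, hi1, hj1, hl1, hx1⟩ | ⟨e1, ex1, ey1⟩ | ⟨e2, ex2, ey2⟩
    · -- both common-level: contradiction by propagation
      -- hl0 : level (f i0) = level (g j0); hl1 : level (g i1) = level (f j1)
      rw [La i0 hi0, Lb j0 hj0] at hl0
      have hl1' := hl1
      rw [Lb i1 hi1, La j1 hj1] at hl1'
      -- i0 - j0 = j1 - i1  (both equal level(g 0) - level(f 0) shifted)
      by_cases hc : i0 ≤ j1
      · have hk : j1 = i0 + (j1 - i0) := by omega
        have hk2 : i1 = j0 + (j1 - i0) := by omega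
        have := prop_many hf hg Hd (j1 - i0) i0 j0 (by omega) (by omega)
          (by rw [La i0 hi0, Lb j0 hj0]; exact hl0) hx0
        rw [← hk, ← hk2] at this
        -- this.2 : (f j1).1 < (g i1).1 ; hx1 : (g i1).1 < (f j1).1
        omega
      · have hk : i0 = j1 + (i0 - j1) := by omega
        have hk2 : j0 = i1 + (i0 - j1) := by omega
        have := prop_many hg hf Hd' (i0 - j1) i1 j1 (by omega) (by omega) hl1 hx1
        rw [← hk, ← hk2] at this
        omega
    · -- Lcom(f,g) with edge1(g,f): level (f 0) = level (g (n-1)) + 1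
      rw [Lb (n-1) hn1] at e1
      rw [La i0 hi0, Lb j0 hj0] at hl0
      omega
    · -- Lcom(f,g) with edge2(g,f): level (f (n-1)) = level (g 0) - 1
      rw [La (n-1) hn1] at e2
      rw [La i0 hi0, Lb j0 hj0] at hl0
      omega
  · rcases B with ⟨i1, j1, hi1, hj1, hl1, hx1⟩ | ⟨e1', ex1', ey1'⟩ | ⟨e2', ex2', ey2'⟩
    · -- edge1(f,g) with Lcom(g,f): level (g 0) = level (f (n-1)) + 1
      rw [La (n-1) hn1] at e1
      rw [Lb i1 hi1, La j1 hj1] at hl1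
      omega
    · -- edge1(f,g) & edge1(g,f)
      rw [La (n-1) hn1] at e1
      rw [Lb (n-1) hn1] at e1'
      omega
    · -- edge1(f,g) & edge2(g,f): same square at different levels
      -- e1 : level (g 0) = level (f (n-1)) + 1
      unfold level at e1 e2'
      omega
  · rcases B with ⟨i1, j1, hi1, hj1, hl1, hx1⟩ | ⟨e1', ex1', ey1'⟩ | ⟨e2', ex2', ey2'⟩
    · -- edge2(f,g) with Lcom(g,f): level (g (n-1)) = level (f 0) - 1
      rw [Lb (n-1) hn1] at e2
      rw [Lb i1 hi1, La j1 hj1] at hl1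
      omega
    · -- edge2(f,g) & edge1(g,f): squares coincide
      unfold level at e2 e1'
      omega
    · -- edge2(f,g) & edge2(g,f)
      rw [Lb (n-1) hn1] at e2
      rw [La (n-1) hn1] at e2'
      omega

theorem tiles_not_both_leftOf (n : ℕ) (R : Finset (ℤ × ℤ))
    (P : Finset (Finset (ℤ × ℤ))) (hP : IsTiling n R P)
    (T1 T2 : Finset (ℤ × ℤ)) (h1 : T1 ∈ P) (h2 : T2 ∈ P) (hne : T1 ≠ T2) :
    ¬ ((∃ s ∈ T1, ∃ t ∈ T2, LeftOf s t) ∧ (∃ s ∈ T2, ∃ t ∈ T1, LeftOf s t)) := by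
  obtain ⟨hrib, hdisj, -⟩ := hP
  obtain ⟨f, hf, hT1⟩ := hrib T1 h1
  obtain ⟨g, hg, hT2⟩ := hrib T2 h2
  have hdj : Disjoint T1 T2 := hdisj h1 h2 hne
  have Hd : ∀ i j, i < n → j < n → f i ≠ g j := by
    intro i j hi hj heq
    have m1 : f i ∈ T1 := by
      rw [hT1]; exact Finset.mem_image_of_mem f (Finset.mem_range.mpr hi)
    have m2 : f i ∈ T2 := by
      rw [hT2, heq]; exact Finset.mem_image_of_mem g (Finset.mem_range.mpr hj)
    exact (Finset.disjoint_left.mp hdj m1) m2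
  rintro ⟨⟨s, hs, t, ht, hst⟩, ⟨s', hs', t', ht', hst'⟩⟩
  rw [hT1, Finset.mem_image] at hs ht'
  rw [hT2, Finset.mem_image] at ht hs'
  obtain ⟨i, hi, rfl⟩ := hs
  obtain ⟨j, hj, rfl⟩ := ht
  obtain ⟨i', hi', rfl⟩ := hs'
  obtain ⟨j', hj', rfl⟩ := ht'
  rw [Finset.mem_range] at hi hj hi' hj'
  exact ribbons_antisym hf hg Hd hi hj hi' hj' hst hst'
end

section
/- Let s_a = log₂ of the maximum number of n-ribbon tilings over all regions of area a·n. Then the sequence (s_a) is superadditive: s_a + s_b ≤ s_{a+b} for all positive integers a, b. -/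
attribute [local instance] Classical.propDecidable

lemma tile_subset {n : ℕ} {R : Finset (ℤ × ℤ)} {P : Finset (Finset (ℤ × ℤ))}
    (h : IsTiling n R P) {T} (hT : T ∈ P) : T ⊆ R := by
  rw [← h.2.2]; exact Finset.subset_biUnion_of_mem id hT

lemma ribbon_nonempty {n : ℕ} (hn : 0 < n) {T : Finset (ℤ × ℤ)} (h : IsRibbon n T) :
    T.Nonempty := by
  obtain ⟨f, -, rfl⟩ := h
  exact (Finset.nonempty_range_iff.2 hn.ne').image f

lemma tilingSet_subset (n : ℕ) (R : Finset (ℤ × ℤ)) :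
    {P | IsTiling n R P} ⊆ ↑(R.powerset.powerset) := by
  intro P hP
  simp only [Finset.coe_powerset, Set.mem_preimage, Set.mem_powerset_iff] at *
  intro T hT
  simp only [Finset.coe_powerset, Set.mem_preimage, Set.mem_powerset_iff]
  exact_mod_cast tile_subset hP (by exact_mod_cast hT)

lemma tilingSet_finite (n : ℕ) (R : Finset (ℤ × ℤ)) : {P | IsTiling n R P}.Finite :=
  Set.Finite.subset (R.powerset.powerset.finite_toSet) (tilingSet_subset n R)

lemma tilingCount_le (n : ℕ) (R : Finset (ℤ × ℤ)) : TilingCount n R ≤ 2 ^ 2 ^ R.card := by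
  have h := Set.ncard_le_ncard (tilingSet_subset n R) (R.powerset.powerset.finite_toSet)
  rw [Set.ncard_coe_finset, Finset.card_powerset, Finset.card_powerset] at h
  exact h

lemma maxT_bdd (n a : ℕ) :
    BddAbove {t : ℕ | ∃ R : Finset (ℤ × ℤ), R.card = a * n ∧ TilingCount n R = t} := by
  refine ⟨2 ^ 2 ^ (a * n), ?_⟩
  rintro t ⟨R, hR, rfl⟩
  rw [← hR]; exact tilingCount_le n R

def rowSq (k : ℕ) : ℤ × ℤ := ((k : ℤ), 0)

lemma rowSq_injective : Function.Injective rowSq := fun i j h => by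
  have : ((i : ℤ)) = (j : ℤ) := congrArg Prod.fst h
  exact_mod_cast this

lemma maxT_spec (n a : ℕ) :
    ∃ R : Finset (ℤ × ℤ), R.card = a * n ∧ TilingCount n R = maxT n a := by
  have hne : {t : ℕ | ∃ R : Finset (ℤ × ℤ), R.card = a * n ∧ TilingCount n R = t}.Nonempty := by
    refine ⟨TilingCount n ((Finset.range (a * n)).image rowSq),
      (Finset.range (a * n)).image rowSq, ?_, rfl⟩
    rw [Finset.card_image_of_injective _ rowSq_injective, Finset.card_range]
  exact Nat.sSup_mem hne (maxT_bdd n a)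

lemma le_maxT {n a : ℕ} {R : Finset (ℤ × ℤ)} (hR : R.card = a * n) :
    TilingCount n R ≤ maxT n a :=
  le_csSup (maxT_bdd n a) ⟨R, hR, rfl⟩

-- Translation
lemma add_injective (v : ℤ × ℤ) : Function.Injective (fun s : ℤ × ℤ => s + v) :=
  fun x y h => by simpa using h

lemma isTiling_translate {n : ℕ} {R : Finset (ℤ × ℤ)} {P : Finset (Finset (ℤ × ℤ))}
    (v : ℤ × ℤ) (h : IsTiling n R P) :
    IsTiling n (R.image (fun s => s + v)) (P.image (Finset.image (fun s => s + v))) := by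
  obtain ⟨hrib, hdisj, hun⟩ := h
  refine ⟨?_, ?_, ?_⟩
  · intro T' hT'
    obtain ⟨T, hT, rfl⟩ := Finset.mem_image.1 hT'
    obtain ⟨f, hf, rfl⟩ := hrib T hT
    refine ⟨fun i => f i + v, fun i hi => ?_, ?_⟩
    · rcases hf i hi with h' | h'
      · left; show f (i + 1) + v = f i + v + (1, 0); rw [h']; abel
      · right; show f (i + 1) + v = f i + v + (0, 1); rw [h']; abel
    · rw [Finset.image_image]; rfl
  · intro x hx y hy hxy
    simp only [Finset.coe_image, Set.mem_image, Finset.mem_coe] at hx hy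
    obtain ⟨T, hT, rfl⟩ := hx
    obtain ⟨U, hU, rfl⟩ := hy
    have hTU : T ≠ U := fun h => hxy (by rw [h])
    have := hdisj (Finset.mem_coe.2 hT) (Finset.mem_coe.2 hU) hTU
    simp only [Function.onFun, id] at this ⊢
    exact (Finset.disjoint_image (add_injective v)).2 this
  · rw [← hun]
    ext x
    simp only [Finset.mem_biUnion, Finset.mem_image, id]
    constructor
    · rintro ⟨T', ⟨T, hT, rfl⟩, hx⟩
      obtain ⟨s, hs, rfl⟩ := Finset.mem_image.1 hx
      exact ⟨s, ⟨T, hT, hs⟩, rfl⟩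
    · rintro ⟨s, ⟨T, hT, hs⟩, rfl⟩
      exact ⟨T.image _, ⟨T, hT, rfl⟩, Finset.mem_image_of_mem _ hs⟩

lemma translate_translate_neg (v : ℤ × ℤ) (T : Finset (ℤ × ℤ)) :
    (T.image (fun s => s + v)).image (fun s => s + (-v)) = T := by
  rw [Finset.image_image]
  have : ((fun s : ℤ × ℤ => s + (-v)) ∘ (fun s => s + v)) = id := by
    funext s; simp
  rw [this, Finset.image_id]

lemma tilingCount_translate (n : ℕ) (R : Finset (ℤ × ℤ)) (v : ℤ × ℤ) :
    TilingCount n (R.image (fun s => s + v)) = TilingCount n R := by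
  have himg : (Finset.image (Finset.image (fun s : ℤ × ℤ => s + v))) ''
      {P | IsTiling n R P} = {P | IsTiling n (R.image (fun s => s + v)) P} := by
    ext Q
    constructor
    · rintro ⟨P, hP, rfl⟩
      exact isTiling_translate v hP
    · intro hQ
      refine ⟨Q.image (Finset.image (fun s => s + (-v))), ?_, ?_⟩
      · have := isTiling_translate (-v) hQ
        rwa [translate_translate_neg] at this
      · rw [Finset.image_image]
        have : (Finset.image (fun s : ℤ × ℤ => s + v) ∘
            Finset.image (fun s => s + (-v))) = id := by
          funext T
          simp only [Function.comp_apply, id, Finset.image_image]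
          have : ((fun s : ℤ × ℤ => s + v) ∘ (fun s => s + (-v))) = id := by
            funext s; simp
          rw [this, Finset.image_id]
        rw [this, Finset.image_id]
  have hinj : Function.Injective (Finset.image (Finset.image (fun s : ℤ × ℤ => s + v))) :=
    Finset.image_injective (Finset.image_injective (add_injective v))
  rw [TilingCount, TilingCount, ← himg, Set.ncard_image_of_injective _ hinj]

-- Union of tilings of disjoint regions
lemma isTiling_union {n : ℕ} (hn : 0 < n) {R₁ R₂ : Finset (ℤ × ℤ)}
    {P₁ P₂ : Finset (Finset (ℤ × ℤ))} (hd : Disjoint R₁ R₂)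
    (h₁ : IsTiling n R₁ P₁) (h₂ : IsTiling n R₂ P₂) :
    IsTiling n (R₁ ∪ R₂) (P₁ ∪ P₂) := by
  refine ⟨?_, ?_, ?_⟩
  · intro T hT
    rcases Finset.mem_union.1 hT with h | h
    · exact h₁.1 T h
    · exact h₂.1 T h
  · intro x hx y hy hxy
    simp only [Finset.coe_union, Set.mem_union, Finset.mem_coe] at hx hy
    simp only [Function.onFun, id]
    rcases hx with hx | hx <;> rcases hy with hy | hy
    · exact h₁.2.1 (Finset.mem_coe.2 hx) (Finset.mem_coe.2 hy) hxy
    · exact hd.mono (tile_subset h₁ hx) (tile_subset h₂ hy)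
    · exact (hd.mono (tile_subset h₁ hy) (tile_subset h₂ hx)).symm
    · exact h₂.2.1 (Finset.mem_coe.2 hx) (Finset.mem_coe.2 hy) hxy
  · rw [← h₁.2.2, ← h₂.2.2]
    ext x
    simp only [Finset.mem_biUnion, Finset.mem_union, id]
    aesop

lemma tiling_filter_eq {n : ℕ} (hn : 0 < n) {R₁ R₂ : Finset (ℤ × ℤ)}
    {P₁ P₂ : Finset (Finset (ℤ × ℤ))} (hd : Disjoint R₁ R₂)
    (h₁ : IsTiling n R₁ P₁) (h₂ : IsTiling n R₂ P₂) :
    (P₁ ∪ P₂).filter (fun T => T ⊆ R₁) = P₁ := by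
  ext T
  simp only [Finset.mem_filter, Finset.mem_union]
  constructor
  · rintro ⟨h | h, hsub⟩
    · exact h
    · exfalso
      obtain ⟨x, hx⟩ := ribbon_nonempty hn (h₂.1 T h)
      exact Finset.disjoint_left.1 hd (hsub hx) (tile_subset h₂ h hx)
  · intro h
    exact ⟨Or.inl h, tile_subset h₁ h⟩

lemma tilingCount_mul_le {n : ℕ} (hn : 0 < n) {R₁ R₂ : Finset (ℤ × ℤ)}
    (hd : Disjoint R₁ R₂) :
    TilingCount n R₁ * TilingCount n R₂ ≤ TilingCount n (R₁ ∪ R₂) := by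
  haveI : Finite ↥{P | IsTiling n (R₁ ∪ R₂) P} := (tilingSet_finite n (R₁ ∪ R₂)).to_subtype
  have key : Nat.card (↥{P | IsTiling n R₁ P} × ↥{P | IsTiling n R₂ P}) ≤
      Nat.card ↥{P | IsTiling n (R₁ ∪ R₂) P} := by
    refine Nat.card_le_card_of_injective
      (fun q => ⟨q.1.1 ∪ q.2.1, isTiling_union hn hd q.1.2 q.2.2⟩) ?_
    rintro ⟨⟨P₁, hP₁⟩, ⟨P₂, hP₂⟩⟩ ⟨⟨Q₁, hQ₁⟩, ⟨Q₂, hQ₂⟩⟩ h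
    have h' : P₁ ∪ P₂ = Q₁ ∪ Q₂ := congrArg Subtype.val h
    have e₁ : P₁ = Q₁ := by
      rw [← tiling_filter_eq hn hd hP₁ hP₂, h', tiling_filter_eq hn hd hQ₁ hQ₂]
    have e₂ : P₂ = Q₂ := by
      rw [← tiling_filter_eq hn hd.symm hP₂ hP₁, ← tiling_filter_eq hn hd.symm hQ₂ hQ₁,
        Finset.union_comm P₂, Finset.union_comm Q₂, h']
    simp [e₁, e₂]
  rw [Nat.card_prod] at key
  simpa only [TilingCount, Nat.card_coe_set_eq] using key

lemma block_inj {n j k i i' : ℕ} (hi : i < n) (hi' : i' < n) (h : j * n + i = k * n + i') :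
    j = k := by
  rcases lt_trichotomy j k with hlt | he | hlt
  · have h2 : j * n + n ≤ k * n := by
      calc j * n + n = (j + 1) * n := by ring
      _ ≤ k * n := Nat.mul_le_mul_right _ hlt
    omega
  · exact he
  · have h2 : k * n + n ≤ j * n := by
      calc k * n + n = (k + 1) * n := by ring
      _ ≤ j * n := Nat.mul_le_mul_right _ hlt
    omega

lemma nat_split {n a k : ℕ} (hn : 0 < n) : k < a * n ↔ ∃ j < a, ∃ i < n, j * n + i = k := by
  constructor
  · intro h
    refine ⟨k / n, ?_, k % n, Nat.mod_lt _ hn, ?_⟩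
    · exact (Nat.div_lt_iff_lt_mul hn).2 h
    · exact Nat.div_add_mod' k n
  · rintro ⟨j, hj, i, hi, rfl⟩
    calc j * n + i < j * n + n := by omega
    _ = (j + 1) * n := by ring
    _ ≤ a * n := Nat.mul_le_mul_right _ hj

lemma row_tiling (n a : ℕ) (hn : 0 < n) :
    IsTiling n ((Finset.range (a * n)).image rowSq)
      ((Finset.range a).image
        (fun j => (Finset.range n).image (fun i => rowSq (j * n + i)))) := by
  refine ⟨?_, ?_, ?_⟩
  · intro T hT
    obtain ⟨j, hj, rfl⟩ := Finset.mem_image.1 hT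
    refine ⟨fun i => rowSq (j * n + i), fun i hi => Or.inl ?_, rfl⟩
    show rowSq (j * n + (i + 1)) = rowSq (j * n + i) + (1, 0)
    simp only [rowSq, Prod.mk_add_mk, Prod.mk.injEq]
    constructor
    · push_cast; ring
    · ring
  · intro x hx y hy hxy
    simp only [Finset.coe_image, Set.mem_image, Finset.mem_coe] at hx hy
    obtain ⟨j, hj, rfl⟩ := hx
    obtain ⟨k, hk, rfl⟩ := hy
    have hjk : j ≠ k := fun h => hxy (by rw [h])
    simp only [Function.onFun, id]
    rw [Finset.disjoint_left]
    intro z hz hz'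
    obtain ⟨i, hi, rfl⟩ := Finset.mem_image.1 hz
    obtain ⟨i', hi', he⟩ := Finset.mem_image.1 hz'
    exact hjk (block_inj (Finset.mem_range.1 hi) (Finset.mem_range.1 hi')
      (rowSq_injective he.symm))
  · ext x
    simp only [Finset.mem_biUnion, Finset.mem_image, Finset.mem_range, id]
    constructor
    · rintro ⟨T, ⟨j, hj, rfl⟩, hx⟩
      obtain ⟨i, hi, rfl⟩ := Finset.mem_image.1 hx
      exact ⟨j * n + i, (nat_split hn).2 ⟨j, hj, i, Finset.mem_range.1 hi, rfl⟩, rfl⟩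
    · rintro ⟨k, hk, rfl⟩
      obtain ⟨j, hj, i, hi, rfl⟩ := (nat_split hn).1 hk
      exact ⟨_, ⟨j, hj, rfl⟩, Finset.mem_image.2 ⟨i, Finset.mem_range.2 hi, rfl⟩⟩

lemma one_le_maxT (n a : ℕ) (hn : 0 < n) : 1 ≤ maxT n a := by
  have h := row_tiling n a hn
  have hpos : 0 < TilingCount n ((Finset.range (a * n)).image rowSq) := by
    rw [TilingCount, Set.ncard_pos (tilingSet_finite _ _)]
    exact ⟨_, h⟩
  exact le_trans hpos (le_maxT
    (by rw [Finset.card_image_of_injective _ rowSq_injective, Finset.card_range]))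

theorem log_maxT_superadditive (n : ℕ) (hn : 2 ≤ n) (a b : ℕ) (ha : 0 < a) (hb : 0 < b) :
    Real.logb 2 (maxT n a) + Real.logb 2 (maxT n b) ≤ Real.logb 2 (maxT n (a + b)) := by
  have hn0 : 0 < n := by omega
  obtain ⟨R₁, hc₁, hT₁⟩ := maxT_spec n a
  obtain ⟨R₂, hc₂, hT₂⟩ := maxT_spec n b
  have hR₁ne : R₁.Nonempty := Finset.card_pos.1 (by rw [hc₁]; exact Nat.mul_pos ha hn0)
  have hR₂ne : R₂.Nonempty := Finset.card_pos.1 (by rw [hc₂]; exact Nat.mul_pos hb hn0)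
  have hAne : (R₁.image Prod.fst).Nonempty := hR₁ne.image _
  have hBne : (R₂.image Prod.fst).Nonempty := hR₂ne.image _
  set v : ℤ × ℤ := ((R₁.image Prod.fst).max' hAne - (R₂.image Prod.fst).min' hBne + 1, 0)
    with hv
  set R₂' := R₂.image (fun s => s + v) with hR₂'
  have hdisj : Disjoint R₁ R₂' := by
    rw [Finset.disjoint_left]
    intro s hs hs'
    obtain ⟨t, ht, rfl⟩ := Finset.mem_image.1 hs'
    have h1 : (t + v).1 ≤ (R₁.image Prod.fst).max' hAne :=
      Finset.le_max' _ _ (Finset.mem_image_of_mem _ hs)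
    have h2 : (R₂.image Prod.fst).min' hBne ≤ t.1 :=
      Finset.min'_le _ _ (Finset.mem_image_of_mem _ ht)
    rw [Prod.fst_add, hv] at h1
    simp only at h1
    omega
  have hc₂' : R₂'.card = b * n := by
    rw [hR₂', Finset.card_image_of_injective _ (add_injective v), hc₂]
  have hT₂' : TilingCount n R₂' = maxT n b := by
    rw [hR₂', tilingCount_translate, hT₂]
  have hcu : (R₁ ∪ R₂').card = (a + b) * n := by
    rw [Finset.card_union_of_disjoint hdisj, hc₁, hc₂']; ring
  have key : maxT n a * maxT n b ≤ maxT n (a + b) := by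
    rw [← hT₁, ← hT₂']
    exact le_trans (tilingCount_mul_le hn0 hdisj) (le_maxT hcu)
  have h1a := one_le_maxT n a hn0
  have h1b := one_le_maxT n b hn0
  have hxa : (0:ℝ) < (maxT n a : ℝ) := by exact_mod_cast h1a
  have hxb : (0:ℝ) < (maxT n b : ℝ) := by exact_mod_cast h1b
  rw [← Real.logb_mul (ne_of_gt hxa) (ne_of_gt hxb), ← Nat.cast_mul]
  exact Real.logb_le_logb_of_le (by norm_num) (by exact_mod_cast Nat.mul_pos h1a h1b)
    (by exact_mod_cast key)
end

section
/- If, in the construction of an n-ribbon tiling level by level, the numbers of available root-square choices at the τ_l root positions of level l are |A_i^{(l)}| with Σ_{i=1}^{τ_l} |A_i^{(l)}| ≤ σ_l for each level l, then the total number of tilings satisfies T_n(R) ≤ Π_l max{Π_i x_i : x_i ∈ ℤ_{>0}, Σ_i x_i ≤ σ_l} and hence T_n(R) ≤ max{Π_{l,i} x_i^{(l)} : x_i^{(l)} ∈ ℤ_{>0}, Σ_{l,i} x_i^{(l)} ≤ A(R)} = n^{A(R)/n}. -/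
attribute [local instance] Classical.propDecidable


lemma amgm_nat {ι : Type*} (s : Finset ι) (f : ι → ℕ) (n : ℕ)
    (h : ∑ i ∈ s, f i ≤ n * s.card) : ∏ i ∈ s, f i ≤ n ^ s.card := by
  rcases Nat.eq_zero_or_pos s.card with hc | hc
  · simp [Finset.card_eq_zero.mp hc]
  set m := s.card with hm
  have hmR : (0:ℝ) < m := by exact_mod_cast hc
  have hw' : ∑ _i ∈ s, (m:ℝ)⁻¹ = 1 := by
    rw [Finset.sum_const, nsmul_eq_mul, ← hm, mul_inv_cancel₀ (ne_of_gt hmR)]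
  have hz : ∀ i ∈ s, (0:ℝ) ≤ (f i : ℝ) := fun i _ => by positivity
  have h1 := Real.geom_mean_le_arith_mean_weighted s (fun _ => (m:ℝ)⁻¹)
    (fun i => (f i : ℝ)) (fun i _ => by positivity) hw' hz
  rw [Real.finset_prod_rpow s _ hz] at h1
  have h2 : ∑ i ∈ s, (m:ℝ)⁻¹ * (f i : ℝ) ≤ (n:ℝ) := by
    rw [← Finset.mul_sum]
    rw [inv_mul_le_iff₀ hmR]
    calc (∑ i ∈ s, (f i:ℝ)) ≤ ((n * m : ℕ) : ℝ) := by
          push_cast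
          exact_mod_cast (by exact_mod_cast h : (∑ i ∈ s, (f i:ℝ)) ≤ ((n*m:ℕ):ℝ))
      _ = (m:ℝ) * n := by push_cast; ring
  have h3 : ((∏ i ∈ s, (f i:ℝ)) ^ ((m:ℝ)⁻¹)) ^ (m:ℝ) ≤ (n:ℝ) ^ (m:ℝ) :=
    Real.rpow_le_rpow (Real.rpow_nonneg (Finset.prod_nonneg hz) _) (le_trans h1 h2) (le_of_lt hmR)
  rw [← Real.rpow_mul (Finset.prod_nonneg hz), inv_mul_cancel₀ (ne_of_gt hmR), Real.rpow_one,
    Real.rpow_natCast] at h3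
  exact_mod_cast h3


theorem optimization_core (n A : ℕ) (hn : 0 < n) (hdvd : n ∣ A)
    (L : Finset ℤ) (σ τ : ℤ → ℕ) (a : ℤ → ℕ → ℕ) (T : ℕ)
    (hpos : ∀ l ∈ L, ∀ i < τ l, 0 < a l i)
    (hrow : ∀ l ∈ L, ∑ i ∈ Finset.range (τ l), a l i ≤ σ l)
    (hσ : ∑ l ∈ L, σ l ≤ A)
    (hτ : ∑ l ∈ L, τ l = A / n)
    (hT : T ≤ ∏ l ∈ L, ∏ i ∈ Finset.range (τ l), a l i) :
    (T ≤ ∏ l ∈ L, sSup {p : ℕ | ∃ x : ℕ → ℕ, (∀ i < τ l, 0 < x i) ∧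
        (∑ i ∈ Finset.range (τ l), x i ≤ σ l) ∧ p = ∏ i ∈ Finset.range (τ l), x i}) ∧
    T ≤ n ^ (A / n) := by
  constructor
  · refine le_trans hT (Finset.prod_le_prod' ?_)
    intro l hl
    have hbdd : BddAbove {p : ℕ | ∃ x : ℕ → ℕ, (∀ i < τ l, 0 < x i) ∧
        (∑ i ∈ Finset.range (τ l), x i ≤ σ l) ∧ p = ∏ i ∈ Finset.range (τ l), x i} := by
      refine ⟨σ l ^ τ l, fun p hp => ?_⟩
      obtain ⟨x, _, hsum, hp⟩ := hp
      subst hp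
      calc ∏ i ∈ Finset.range (τ l), x i ≤ σ l ^ (Finset.range (τ l)).card := by
            apply Finset.prod_le_pow_card
            intro i hi
            exact le_trans (Finset.single_le_sum (fun j _ => Nat.zero_le _) hi) hsum
        _ = σ l ^ τ l := by rw [Finset.card_range]
    exact le_csSup hbdd ⟨a l, hpos l hl, hrow l hl, rfl⟩
  · refine le_trans hT ?_
    have hflat : ∏ l ∈ L, ∏ i ∈ Finset.range (τ l), a l i
        = ∏ p ∈ L.sigma (fun l => Finset.range (τ l)), a p.1 p.2 :=
      Finset.prod_sigma' L (fun l => Finset.range (τ l)) (fun l i => a l i)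
    have hcard : (L.sigma (fun l => Finset.range (τ l))).card = A / n := by
      rw [Finset.card_sigma]
      simpa using hτ
    have hsum : ∑ p ∈ L.sigma (fun l => Finset.range (τ l)), a p.1 p.2
        ≤ n * (L.sigma (fun l => Finset.range (τ l))).card := by
      rw [hcard, Nat.mul_div_cancel' hdvd,
        ← Finset.sum_sigma' L (fun l => Finset.range (τ l)) (fun l i => a l i)]
      exact le_trans (Finset.sum_le_sum hrow) hσ
    rw [hflat, ← hcard]
    exact amgm_nat _ _ n hsum
end
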